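/- arXiv:2605.18981 — 2 statements merged into one kernel-verified Lean document; each statement's English description precedes it below -/
import Mathlib

section
/- With notation as above, if 𝓛_X, 𝓛_Z ⊆ 𝔽_q^n are 𝔽_q-subspaces with 𝓛_X ⊆ 𝓛_Z^⊥ (Euclidean orthogonality over 𝔽_q), then the 𝔽₂-subspaces L_X = D_𝓑(𝓛_X) and L_Z = D_{𝓑*}(𝓛_Z) of 𝔽₂^{ns} satisfy L_X ⊆ L_Z^⊥ with respect to the standard 𝔽₂ inner product. -/
/-!
Write `Tr x = ∑_{m<s} x^(2^m)`. The map `(x, y) ↦ Tr (x y)` is `𝔽₂`-bilinear and by the duality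
hypothesis takes the value `δ_jk` on the pair of basis vectors `(B_i j, B*_i k)`; hence, viewed in
`F`, the `i`-th block `∑_j (B_i).repr (v i) j * (B*_i).repr (w i) j` equals `Tr (v i * w i)`.
Summing over `i` and using additivity of `Tr` gives `Tr (∑_i v i * w i) = Tr 0 = 0`.
-/

open Finset

namespace Module.Basis

variable {K A M N ι : Type*} [CommRing K] [Ring A] [Algebra K A] [AddCommGroup M] [Module K M]
  [AddCommGroup N] [Module K N] [Fintype ι] [DecidableEq ι]

theorem algebraMap_sum_repr_mul_repr_of_apply_eq_ite (b : Basis ι K M) (b' : Basis ι K N)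
    {β : M →ₗ[K] N →ₗ[K] A} (hβ : ∀ j k, β (b j) (b' k) = if j = k then 1 else 0) (x : M) (y : N) :
    algebraMap K A (∑ j, b.repr x j * b'.repr y j) = β x y := by
  rw [← LinearMap.sum_repr_mul_repr_mul b b' x y]
  simp [Finsupp.sum_fintype, hβ, map_sum, Algebra.smul_def]

end Module.Basis

namespace FiniteField

variable (K R : Type*) [Field K] [Fintype K] [CommRing R] [Algebra K R]

/-- For a field `R` of degree `s` over `K` this is the trace `Tr_{R/K}`. -/
noncomputable def frobeniusPowSum (s : ℕ) : R →ₗ[K] R :=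
  ∑ m ∈ range s, ((frobeniusAlgHom K R) ^ m).toLinearMap

theorem frobeniusPowSum_apply (s : ℕ) (x : R) :
    frobeniusPowSum K R s x = ∑ m ∈ range s, x ^ Fintype.card K ^ m := by
  simp [frobeniusPowSum, LinearMap.sum_apply, AlgHom.coe_pow, coe_frobeniusAlgHom, pow_iterate]

end FiniteField

open FiniteField in
theorem mapped_codes_orthogonal_general {F : Type*} [Field F]
    [Algebra (ZMod 2) F] (s n : ℕ)
    (B Bstar : Fin n → Module.Basis (Fin s) (ZMod 2) F)
    (hdual : ∀ (i : Fin n) (j k : Fin s),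
      (∑ m ∈ Finset.range s, (B i j * Bstar i k) ^ (2 ^ m)) = if j = k then 1 else 0)
    (LX LZ : Submodule F (Fin n → F))
    (horth : ∀ v ∈ LX, ∀ w ∈ LZ, ∑ i : Fin n, v i * w i = 0) :
    ∀ v ∈ LX, ∀ w ∈ LZ,
      (∑ i : Fin n, ∑ j : Fin s, (B i).repr (v i) j * (Bstar i).repr (w i) j) = 0 := by
  intro v hv w hw
  let traceForm := (LinearMap.mul (ZMod 2) F).compr₂ (frobeniusPowSum (ZMod 2) F s)
  have htrace : ∀ x, frobeniusPowSum (ZMod 2) F s x = ∑ m ∈ range s, x ^ 2 ^ m := by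
    simpa [ZMod.card] using frobeniusPowSum_apply (ZMod 2) F s
  apply (algebraMap (ZMod 2) F).injective
  calc algebraMap (ZMod 2) F (∑ i, ∑ j, (B i).repr (v i) j * (Bstar i).repr (w i) j)
      = ∑ i, traceForm (v i) (w i) := by
        rw [map_sum]
        refine sum_congr rfl fun i _ ↦ (B i).algebraMap_sum_repr_mul_repr_of_apply_eq_ite (Bstar i)
          (fun j k ↦ ?_) _ _
        simp [traceForm, htrace, hdual]
    _ = frobeniusPowSum (ZMod 2) F s (∑ i, v i * w i) := by simp [traceForm, map_sum]
    _ = algebraMap (ZMod 2) F 0 := by rw [horth v hv w hw, map_zero, map_zero]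

/-- If 𝓛_X ⊆ 𝓛_Z^⊥ over 𝔽_q, then the mapped 𝔽₂-codes L_X = D_𝓑(𝓛_X) and
L_Z = D_{𝓑*}(𝓛_Z) satisfy L_X ⊆ L_Z^⊥ for the standard 𝔽₂ inner product. -/
theorem mapped_codes_orthogonal {F : Type*} [Field F] [Fintype F]
    [Algebra (ZMod 2) F] (s n : ℕ) (hs : Fintype.card F = 2 ^ s)
    (B Bstar : Fin n → Module.Basis (Fin s) (ZMod 2) F)
    (hdual : ∀ (i : Fin n) (j k : Fin s),
      (∑ m ∈ Finset.range s, (B i j * Bstar i k) ^ (2 ^ m)) = if j = k then 1 else 0)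
    (LX LZ : Submodule F (Fin n → F))
    (horth : ∀ v ∈ LX, ∀ w ∈ LZ, ∑ i : Fin n, v i * w i = 0) :
    ∀ v ∈ LX, ∀ w ∈ LZ,
      (∑ i : Fin n, ∑ j : Fin s, (B i).repr (v i) j * (Bstar i).repr (w i) j) = 0 :=
  mapped_codes_orthogonal_general s n B Bstar hdual LX LZ horth
end

section
/- With notation as above, the dual of the mapped code equals the mapped dual: D_𝓑(𝓛)^⊥ = D_{𝓑*}(𝓛^⊥) for any 𝔽_q-subspace 𝓛 ⊆ 𝔽_q^n, where ⊥ on the left is over 𝔽₂ and on the right is over 𝔽_q. -/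
/-!
The Frobenius sum `∑_{m<s} c^(2^m)` is the trace of `F` over `𝔽₂`, so the hypothesis says that
`Bᵢ*` is the trace-dual basis of `Bᵢ`. Expanding in these bases gives
`Tr(ab) = ∑ₖ [a]_{Bᵢ,k} [b]_{Bᵢ*,k}`, hence the `𝔽₂`-pairing of `D_𝓑(v)` and `D_{𝓑*}(w)` is
`Tr(∑ᵢ vᵢ wᵢ)`. This gives `⊇`. Conversely every `x` is `D_{𝓑*}(w)` for some `w`, and since `𝓛`
is closed under `F`-scaling, `Tr(a ∑ᵢ vᵢ wᵢ) = 0` for all `a : F`; a nonzero functional kills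
no nonzero principal ideal, so `∑ᵢ vᵢ wᵢ = 0`.
-/

open Module

theorem LinearMap.eq_zero_of_forall_map_mul_eq_zero {K F : Type*} [CommRing K] [DivisionRing F]
    [Algebra K F] {τ : F →ₗ[K] K} (hτ : τ ≠ 0) {c : F} (hc : ∀ a, τ (a * c) = 0) : c = 0 := by
  by_contra hc0
  exact hτ <| LinearMap.ext fun a => by simpa [hc0] using hc (a * c⁻¹)

theorem LinearMap.ne_zero_of_map_mul_eq_ite {K A : Type*} [CommRing K] [Ring A] [Nontrivial A]
    [Algebra K A] {ι : Type*} [DecidableEq ι] {τ : A →ₗ[K] K} {B B' : Basis ι K A}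
    (hBB' : ∀ j k, τ (B j * B' k) = if j = k then 1 else 0) : τ ≠ 0 := by
  have : Nontrivial K := Module.nontrivial K A
  obtain ⟨j⟩ := B.index_nonempty
  intro hτ
  simpa [hτ] using hBB' j j

theorem Algebra.trace_eq_of_sum_pow_eq_algebraMap {K L : Type*} [Field K] [Field L] [Finite L]
    [Algebra K L] {ι : Type*} [Fintype ι] (b : Basis ι K L) {x : L} {c : K}
    (h : ∑ m ∈ Finset.range (Fintype.card ι), x ^ (Nat.card K ^ m) = algebraMap K L c) :
    Algebra.trace K L x = c := by
  apply FaithfulSMul.algebraMap_injective K L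
  rw [FiniteField.algebraMap_trace_eq_sum_pow, finrank_eq_card_basis b, h]

namespace DualBasis

section

variable {K A : Type*} [CommRing K] [Ring A] [Algebra K A] {ι : Type*} [Fintype ι]

/-- The map `D_𝓑` of the paper. -/
noncomputable def coordinates {n : Type*} (B : n → Basis ι K A) (w : n → A) : n × ι → K :=
  fun p => (B p.1).repr (w p.1) p.2

theorem coordinates_surjective {n : Type*} (B : n → Basis ι K A) :
    Function.Surjective (coordinates B) :=
  fun x => ⟨fun i => (B i).equivFun.symm fun k => x (i, k), funext fun p =>
    congrFun ((B p.1).equivFun.apply_symm_apply _) p.2⟩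

variable [DecidableEq ι] (τ : A →ₗ[K] K)

theorem map_mul_eq_sum_repr_mul_repr {B B' : Basis ι K A}
    (hBB' : ∀ j k, τ (B j * B' k) = if j = k then 1 else 0) (a b : A) :
    τ (a * b) = ∑ k, B.repr a k * B'.repr b k := by
  conv_lhs => rw [← B.sum_repr a, ← B'.sum_repr b, Finset.sum_mul_sum, map_sum]
  simp only [smul_mul_smul_comm, map_sum, map_smul, hBB', smul_eq_mul, mul_ite, mul_one,
    mul_zero, Finset.sum_ite_eq, Finset.mem_univ, if_true]

theorem sum_coordinates_mul_coordinates {n : Type*} [Fintype n] {B B' : n → Basis ι K A}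
    (hBB' : ∀ i j k, τ (B i j * B' i k) = if j = k then 1 else 0) (v w : n → A) :
    ∑ p, coordinates B' w p * coordinates B v p = τ (∑ i, v i * w i) := by
  rw [Fintype.sum_prod_type, map_sum]
  refine Finset.sum_congr rfl fun i _ => ?_
  simp only [coordinates, map_mul_eq_sum_repr_mul_repr τ (hBB' i), mul_comm]

end

theorem orthogonal_image_coordinates_eq_image_orthogonal {K F : Type*} [CommRing K] [Field F]
    [Algebra K F] (τ : F →ₗ[K] K) {ι n : Type*} [Fintype ι] [DecidableEq ι] [Fintype n]
    {B B' : n → Basis ι K F}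
    (hBB' : ∀ i j k, τ (B i j * B' i k) = if j = k then 1 else 0) (L : Submodule F (n → F)) :
    {x | ∀ v ∈ L, ∑ p, x p * coordinates B v p = 0} =
      coordinates B' '' {w | ∀ v ∈ L, ∑ i, v i * w i = 0} := by
  ext x
  constructor
  · intro hx
    obtain ⟨w, rfl⟩ := coordinates_surjective B' x
    refine ⟨w, fun v hv => ?_, rfl⟩
    obtain _ | ⟨⟨i⟩⟩ := isEmpty_or_nonempty n
    · simp
    refine LinearMap.eq_zero_of_forall_map_mul_eq_zero
      (LinearMap.ne_zero_of_map_mul_eq_ite (hBB' i)) fun a => ?_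
    calc τ (a * ∑ i, v i * w i) = τ (∑ i, (a • v) i * w i) := by
          simp only [Finset.mul_sum, Pi.smul_apply, smul_eq_mul, mul_assoc]
      _ = ∑ p, coordinates B' w p * coordinates B (a • v) p :=
          (sum_coordinates_mul_coordinates τ hBB' _ _).symm
      _ = 0 := hx _ (L.smul_mem a hv)
  · rintro ⟨w, hw, rfl⟩ v hv
    rw [sum_coordinates_mul_coordinates τ hBB', hw v hv, map_zero]

end DualBasis

theorem dual_of_mapped_code_general {F : Type*} [Field F] [Fintype F]
    [Algebra (ZMod 2) F] (s n : ℕ)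
    (B Bstar : Fin n → Module.Basis (Fin s) (ZMod 2) F)
    (hdual : ∀ (i : Fin n) (j k : Fin s),
      (∑ m ∈ Finset.range s, (B i j * Bstar i k) ^ (2 ^ m)) = if j = k then 1 else 0)
    (L : Submodule F (Fin n → F)) :
    {x : Fin n × Fin s → ZMod 2 | ∀ v ∈ L,
        (∑ p : Fin n × Fin s, x p * (B p.1).repr (v p.1) p.2) = 0} =
      (fun (w : Fin n → F) (p : Fin n × Fin s) => (Bstar p.1).repr (w p.1) p.2) ''
        {w : Fin n → F | ∀ v ∈ L, ∑ i : Fin n, v i * w i = 0} := by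
  have htrace (i : Fin n) (j k : Fin s) :
      Algebra.trace (ZMod 2) F (B i j * Bstar i k) = if j = k then 1 else 0 :=
    Algebra.trace_eq_of_sum_pow_eq_algebraMap (B i) (by simpa [apply_ite] using hdual i j k)
  exact DualBasis.orthogonal_image_coordinates_eq_image_orthogonal _ htrace L

/-- The dual of the mapped code equals the mapped dual: D_𝓑(𝓛)^⊥ = D_{𝓑*}(𝓛^⊥),
where D_𝓑, D_{𝓑*} : 𝔽_q^n → 𝔽₂^{ns} are the coordinate maps with respect to
𝔂₂-bases Bᵢ of 𝔽_q and their trace-dual bases. -/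
theorem dual_of_mapped_code {F : Type*} [Field F] [Fintype F]
    [Algebra (ZMod 2) F] (s n : ℕ) (hs : Fintype.card F = 2 ^ s)
    (B Bstar : Fin n → Module.Basis (Fin s) (ZMod 2) F)
    (hdual : ∀ (i : Fin n) (j k : Fin s),
      (∑ m ∈ Finset.range s, (B i j * Bstar i k) ^ (2 ^ m)) = if j = k then 1 else 0)
    (L : Submodule F (Fin n → F)) :
    {x : Fin n × Fin s → ZMod 2 | ∀ v ∈ L,
        (∑ p : Fin n × Fin s, x p * (B p.1).repr (v p.1) p.2) = 0} =
      (fun (w : Fin n → F) (p : Fin n × Fin s) => (Bstar p.1).repr (w p.1) p.2) ''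
        {w : Fin n → F | ∀ v ∈ L, ∑ i : Fin n, v i * w i = 0} :=
  dual_of_mapped_code_general s n B Bstar hdual L
end
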